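/- Let α > 0. For every λ ≥ −1 the improper Riemann integral lim_{R→∞} ∫_{1}^{R} ξ^{−1/2} e^{i(λξ + ξ^{α+1})} dξ exists; the resulting function is continuous on [−1, ∞) and tends to 0 as λ → +∞. -/

import Mathlib

/-! The phase `φ(ξ) = λξ + ξ^{α+1}` has derivative `ψ = λ + (α+1)ξ^α ≥ λ + α + 1 ≥ α > 0` on
`[1, ∞)`. Writing `ξ^{-1/2} = (ξ^{-1/2}/ψ) ψ`, one integration by parts turns the integral into a
boundary term of size `O(R^{-1/2})` plus an integral of `(ξ^{-1/2}/ψ)' e^{iφ}`, and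
`|(ξ^{-1/2}/ψ)'| ≤ (α + 3/2)/(λ + α + 1) ξ^{-3/2}`. This bound is integrable, uniform in `λ ≥ -1`
(continuity by dominated convergence) and `O(1/λ)` (decay). -/

open MeasureTheory Filter Set Complex Topology

theorem intervalIntegral.integral_mul_deriv_mul_cexp_eq {a c : ℝ} {b b' φ φ' : ℝ → ℝ}
    (hb : ∀ x ∈ uIcc a c, HasDerivAt b (b' x) x) (hφ : ∀ x ∈ uIcc a c, HasDerivAt φ (φ' x) x)
    (hb' : ContinuousOn b' (uIcc a c)) (hφ' : ContinuousOn φ' (uIcc a c)) :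
    ∫ x in a..c, (b x * φ' x : ℂ) * exp (I * φ x) =
      -I * (b c * exp (I * φ c) - b a * exp (I * φ a)) +
        I * ∫ x in a..c, (b' x : ℂ) * exp (I * φ x) := by
  have hφc : ContinuousOn φ (uIcc a c) := fun x hx => (hφ x hx).continuousAt.continuousWithinAt
  have hexp : ContinuousOn (fun x => exp (I * φ x)) (uIcc a c) := by fun_prop
  have hibp := intervalIntegral.integral_mul_deriv_eq_deriv_mul
    (u := fun x => (b x : ℂ)) (v := fun x => exp (I * φ x))
    (fun x hx => (hb x hx).ofReal_comp)
    (fun x hx => ((((hφ x hx).ofReal_comp).const_mul I).cexp))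
    (ContinuousOn.intervalIntegrable (by fun_prop))
    (ContinuousOn.intervalIntegrable (by fun_prop))
  calc ∫ x in a..c, (b x * φ' x : ℂ) * exp (I * φ x)
      = ∫ x in a..c, -I * ((b x : ℂ) * (exp (I * φ x) * (I * φ' x))) := by
        refine intervalIntegral.integral_congr fun x _ => ?_
        ring_nf; simp
    _ = _ := by rw [intervalIntegral.integral_const_mul, hibp]; ring

namespace NonstationaryPhase

noncomputable section

def phase (α l ξ : ℝ) : ℝ := l * ξ + ξ ^ (α + 1)

def phaseDeriv (α l ξ : ℝ) : ℝ := l + (α + 1) * ξ ^ α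

def amplitude (α l ξ : ℝ) : ℝ := ξ ^ (-(2⁻¹) : ℝ) / phaseDeriv α l ξ

def amplitudeDeriv (α l ξ : ℝ) : ℝ :=
  -(ξ ^ (-(3 / 2) : ℝ) / phaseDeriv α l ξ) * (2⁻¹ + α * ((α + 1) * ξ ^ α / phaseDeriv α l ξ))

def remainder (α l ξ : ℝ) : ℂ := amplitudeDeriv α l ξ * exp (I * phase α l ξ)

def kernel (α l : ℝ) : ℂ :=
  I * (amplitude α l 1 * exp (I * phase α l 1)) + I * ∫ ξ in Ioi 1, remainder α l ξ

end

variable {α l ξ : ℝ}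

theorem hasDerivAt_phase (hξ : 0 < ξ) : HasDerivAt (phase α l) (phaseDeriv α l ξ) ξ := by
  have h : HasDerivAt (phase α l) (l * 1 + (α + 1) * ξ ^ (α + 1 - 1)) ξ :=
    ((hasDerivAt_id ξ).const_mul l).add (Real.hasDerivAt_rpow_const (Or.inl hξ.ne'))
  simpa [phaseDeriv] using h

theorem hasDerivAt_amplitude (hξ : 0 < ξ) (hψ : phaseDeriv α l ξ ≠ 0) :
    HasDerivAt (amplitude α l) (amplitudeDeriv α l ξ) ξ := by
  have hψ' : HasDerivAt (phaseDeriv α l) ((α + 1) * (α * ξ ^ (α - 1))) ξ :=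
    ((Real.hasDerivAt_rpow_const (Or.inl hξ.ne')).const_mul (α + 1)).const_add l
  have h : HasDerivAt (amplitude α l) _ ξ :=
    (Real.hasDerivAt_rpow_const (p := -(2⁻¹)) (Or.inl hξ.ne')).div hψ' hψ
  convert h using 1
  have h1 : ξ ^ (-(2⁻¹) - 1 : ℝ) = ξ ^ (-(3 / 2) : ℝ) := by norm_num
  have h2 : ξ ^ (-(2⁻¹) : ℝ) * ξ ^ (α - 1) = ξ ^ (-(3 / 2) : ℝ) * ξ ^ α := by
    rw [← Real.rpow_add hξ, ← Real.rpow_add hξ]; ring_nf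
  rw [amplitudeDeriv, h1, show ξ ^ (-(2⁻¹) : ℝ) * ((α + 1) * (α * ξ ^ (α - 1)))
    = (α + 1) * α * (ξ ^ (-(3 / 2) : ℝ) * ξ ^ α) by rw [← h2]; ring]
  field_simp
  ring

theorem add_le_phaseDeriv (hα : 0 ≤ α) (hξ : 1 ≤ ξ) : l + (α + 1) ≤ phaseDeriv α l ξ := by
  have := Real.one_le_rpow hξ hα
  unfold phaseDeriv; nlinarith

theorem phaseDeriv_pos (hα : 0 < α) (hl : -1 ≤ l) (hξ : 1 ≤ ξ) : 0 < phaseDeriv α l ξ :=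
  (show 0 < l + (α + 1) by linarith).trans_le (add_le_phaseDeriv hα.le hξ)

theorem abs_amplitude_le (hα : 0 < α) (hl : -1 ≤ l) (hξ : 1 ≤ ξ) :
    |amplitude α l ξ| ≤ ξ ^ (-(2⁻¹) : ℝ) / (l + (α + 1)) := by
  rw [amplitude, abs_of_nonneg (div_nonneg (by positivity) (phaseDeriv_pos hα hl hξ).le)]
  exact div_le_div_of_nonneg_left (by positivity) (by linarith)
    (add_le_phaseDeriv hα.le hξ)

theorem abs_amplitudeDeriv_le (hα : 0 < α) (hl : -1 ≤ l) (hξ : 1 ≤ ξ) :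
    |amplitudeDeriv α l ξ| ≤ (α + 3 / 2) / (l + (α + 1)) * ξ ^ (-(3 / 2) : ℝ) := by
  have hψ := phaseDeriv_pos hα hl hξ
  have ht := Real.one_le_rpow hξ hα.le
  have hq : α * ((α + 1) * ξ ^ α / phaseDeriv α l ξ) ≤ α + 1 := by
    rw [mul_div_assoc', div_le_iff₀ hψ, phaseDeriv]; nlinarith
  have hs : 0 ≤ ξ ^ (-(3 / 2) : ℝ) := by positivity
  have hden : 0 < l + (α + 1) := by linarith
  rw [amplitudeDeriv, abs_mul, abs_neg, abs_of_nonneg (div_nonneg hs hψ.le),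
    abs_of_nonneg (by positivity)]
  calc ξ ^ (-(3 / 2) : ℝ) / phaseDeriv α l ξ * (2⁻¹ + α * ((α + 1) * ξ ^ α / phaseDeriv α l ξ))
      ≤ ξ ^ (-(3 / 2) : ℝ) / (l + (α + 1)) * (α + 3 / 2) := by
        refine mul_le_mul (div_le_div_of_nonneg_left hs hden (add_le_phaseDeriv hα.le hξ))
          (by linarith) (by positivity) (div_nonneg hs hden.le)
    _ = _ := by ring

theorem continuous_phaseDeriv (hα : 0 ≤ α) : Continuous (phaseDeriv α l) := by
  unfold phaseDeriv; fun_prop (disch := assumption)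

theorem continuousOn_amplitudeDeriv (hα : 0 < α) (hl : -1 ≤ l) :
    ContinuousOn (amplitudeDeriv α l) (Ici 1) := by
  have hψ : ∀ ξ ∈ Ici (1 : ℝ), phaseDeriv α l ξ ≠ 0 := fun ξ hξ => (phaseDeriv_pos hα hl hξ).ne'
  have h0 : ∀ ξ ∈ Ici (1 : ℝ), ξ ≠ 0 := fun ξ hξ => by simp at hξ; positivity
  have := (continuous_phaseDeriv (l := l) hα.le).continuousOn (s := Ici 1)
  unfold amplitudeDeriv
  fun_prop (disch := first | assumption | exact hα.le)

theorem norm_remainder : ‖remainder α l ξ‖ = |amplitudeDeriv α l ξ| := by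
  rw [remainder, norm_mul, norm_exp_I_mul_ofReal, mul_one, norm_real, Real.norm_eq_abs]

theorem norm_remainder_le (hα : 0 < α) (hl : -1 ≤ l) (hξ : 1 ≤ ξ) :
    ‖remainder α l ξ‖ ≤ (α + 3 / 2) / (l + (α + 1)) * ξ ^ (-(3 / 2) : ℝ) :=
  norm_remainder.trans_le (abs_amplitudeDeriv_le hα hl hξ)

theorem integrableOn_rpow_neg_three_halves :
    IntegrableOn (fun ξ : ℝ => ξ ^ (-(3 / 2) : ℝ)) (Ioi 1) :=
  integrableOn_Ioi_rpow_of_lt (by norm_num) one_pos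

theorem integral_Ioi_rpow_neg_three_halves : ∫ ξ in Ioi (1 : ℝ), ξ ^ (-(3 / 2) : ℝ) = 2 := by
  rw [integral_Ioi_rpow_of_lt (by norm_num) one_pos]; norm_num

theorem continuousOn_remainder (hα : 0 < α) (hl : -1 ≤ l) :
    ContinuousOn (remainder α l) (Ici 1) := by
  unfold remainder phase
  have := continuousOn_amplitudeDeriv hα hl
  fun_prop (disch := first | assumption | linarith)

theorem continuousOn_remainder_param (hα : 0 < α) (hξ : 1 ≤ ξ) :
    ContinuousOn (fun l => remainder α l ξ) (Ici (-1)) := by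
  have hψ : ∀ l ∈ Ici (-1 : ℝ), phaseDeriv α l ξ ≠ 0 := fun l hl => (phaseDeriv_pos hα hl hξ).ne'
  unfold remainder amplitudeDeriv phase phaseDeriv at *
  fun_prop (disch := assumption)

theorem integrableOn_remainder (hα : 0 < α) (hl : -1 ≤ l) :
    IntegrableOn (remainder α l) (Ioi 1) := by
  refine Integrable.mono'
    (integrableOn_rpow_neg_three_halves.const_mul ((α + 3 / 2) / (l + (α + 1))))
    ((continuousOn_remainder hα hl).mono Ioi_subset_Ici_self |>.aestronglyMeasurable
      measurableSet_Ioi) ?_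
  filter_upwards [ae_restrict_mem measurableSet_Ioi] with ξ hξ
  exact norm_remainder_le hα hl (le_of_lt hξ)

theorem intervalIntegral_eq_boundary_add_remainder (hα : 0 < α) (hl : -1 ≤ l) {R : ℝ}
    (hR : 1 ≤ R) :
    ∫ ξ in (1 : ℝ)..R, ((ξ ^ (-(2⁻¹) : ℝ) : ℝ) : ℂ) * exp (I * phase α l ξ) =
      -I * (amplitude α l R * exp (I * phase α l R) - amplitude α l 1 * exp (I * phase α l 1)) +
        I * ∫ ξ in (1 : ℝ)..R, remainder α l ξ := by
  have hsub : Icc 1 R ⊆ Ici (1 : ℝ) := Icc_subset_Ici_self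
  have hpos : ∀ ξ ∈ Icc 1 R, 0 < ξ := fun ξ hξ => one_pos.trans_le hξ.1
  unfold remainder
  rw [← intervalIntegral.integral_mul_deriv_mul_cexp_eq (φ' := phaseDeriv α l)]
  · refine intervalIntegral.integral_congr fun ξ hξ => ?_
    rw [uIcc_of_le hR] at hξ
    rw [← ofReal_mul, amplitude, div_mul_cancel₀ _ (phaseDeriv_pos hα hl hξ.1).ne']
  · intro ξ hξ
    rw [uIcc_of_le hR] at hξ
    exact hasDerivAt_amplitude (hpos ξ hξ) (phaseDeriv_pos hα hl hξ.1).ne'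
  · intro ξ hξ
    rw [uIcc_of_le hR] at hξ
    exact hasDerivAt_phase (hpos ξ hξ)
  · rw [uIcc_of_le hR]; exact (continuousOn_amplitudeDeriv hα hl).mono hsub
  · exact (continuous_phaseDeriv hα.le).continuousOn

theorem tendsto_amplitude_mul_exp (hα : 0 < α) (hl : -1 ≤ l) :
    Tendsto (fun R => (amplitude α l R : ℂ) * exp (I * phase α l R)) atTop (𝓝 0) := by
  have hdecay := (tendsto_rpow_neg_atTop (by norm_num : (0 : ℝ) < 2⁻¹)).div_const (l + (α + 1))
  rw [zero_div] at hdecay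
  refine squeeze_zero_norm' ?_ hdecay
  filter_upwards [eventually_ge_atTop 1] with R hR
  rw [norm_mul, norm_exp_I_mul_ofReal, mul_one, norm_real, Real.norm_eq_abs]
  exact abs_amplitude_le hα hl hR

theorem tendsto_intervalIntegral_kernel (hα : 0 < α) (hl : -1 ≤ l) :
    Tendsto (fun R => ∫ ξ in (1 : ℝ)..R, ((ξ ^ (-(2⁻¹) : ℝ) : ℝ) : ℂ) * exp (I * phase α l ξ))
      atTop (𝓝 (kernel α l)) := by
  have hlim := (((tendsto_amplitude_mul_exp hα hl).sub
    (tendsto_const_nhds (x := (amplitude α l 1 : ℂ) * exp (I * phase α l 1)))).const_mul (-I)).add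
    ((intervalIntegral_tendsto_integral_Ioi 1 (integrableOn_remainder hα hl) tendsto_id).const_mul I)
  rw [kernel]
  convert hlim.congr' ?_ using 2
  · ring
  · filter_upwards [eventually_ge_atTop 1] with R hR
    exact (intervalIntegral_eq_boundary_add_remainder hα hl hR).symm

theorem continuousOn_kernel (hα : 0 < α) : ContinuousOn (kernel α) (Ici (-1)) := by
  have hψ : ∀ l ∈ Ici (-1 : ℝ), phaseDeriv α l 1 ≠ 0 := fun l hl => (phaseDeriv_pos hα hl le_rfl).ne'
  have hboundary : ContinuousOn (fun l => amplitude α l 1 * exp (I * phase α l 1)) (Ici (-1)) := by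
    unfold amplitude phase phaseDeriv at *
    fun_prop (disch := assumption)
  have hintegral : ContinuousOn (fun l => ∫ ξ in Ioi 1, remainder α l ξ) (Ici (-1)) := by
    refine continuousOn_of_dominated (bound := fun ξ => (α + 3 / 2) / α * ξ ^ (-(3 / 2) : ℝ))
      (fun l hl => (integrableOn_remainder hα hl).aestronglyMeasurable) (fun l hl => ?_)
      (integrableOn_rpow_neg_three_halves.const_mul _) ?_
    · filter_upwards [ae_restrict_mem measurableSet_Ioi] with ξ hξ
      refine (norm_remainder_le hα hl (le_of_lt hξ)).trans (mul_le_mul_of_nonneg_right ?_ ?_)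
      · exact div_le_div_of_nonneg_left (by positivity) hα (by simp at hl; linarith)
      · exact (Real.rpow_pos_of_pos (one_pos.trans hξ) _).le
    · filter_upwards [ae_restrict_mem measurableSet_Ioi] with ξ hξ
      exact continuousOn_remainder_param hα (le_of_lt hξ)
  exact (continuousOn_const.mul hboundary).add (continuousOn_const.mul hintegral)

theorem norm_kernel_le (hα : 0 < α) (hl : -1 ≤ l) :
    ‖kernel α l‖ ≤ (2 * α + 4) / (l + (α + 1)) := by
  have hboundary : ‖I * (amplitude α l 1 * exp (I * phase α l 1))‖ ≤ 1 / (l + (α + 1)) := by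
    rw [norm_mul, norm_I, one_mul, norm_mul, norm_exp_I_mul_ofReal, mul_one, norm_real,
      Real.norm_eq_abs]
    simpa using abs_amplitude_le hα hl le_rfl
  have hintegral : ‖I * ∫ ξ in Ioi 1, remainder α l ξ‖ ≤ (α + 3 / 2) / (l + (α + 1)) * 2 := by
    have hbound := norm_integral_le_of_norm_le (integrableOn_rpow_neg_three_halves.const_mul _)
      ((ae_restrict_mem measurableSet_Ioi).mono fun ξ hξ => norm_remainder_le hα hl (le_of_lt hξ))
    rw [integral_const_mul, integral_Ioi_rpow_neg_three_halves] at hbound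
    rwa [norm_mul, norm_I, one_mul]
  calc ‖kernel α l‖ ≤ 1 / (l + (α + 1)) + (α + 3 / 2) / (l + (α + 1)) * 2 :=
        (norm_add_le _ _).trans (add_le_add hboundary hintegral)
    _ = (2 * α + 4) / (l + (α + 1)) := by ring

theorem tendsto_kernel_atTop (hα : 0 < α) : Tendsto (kernel α) atTop (𝓝 0) := by
  refine squeeze_zero_norm' ?_ ((tendsto_const_nhds (x := 2 * α + 4)).div_atTop
    (tendsto_atTop_add_const_right _ (α + 1) tendsto_id))
  filter_upwards [eventually_ge_atTop (-1)] with l hl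
  exact norm_kernel_le hα hl

end NonstationaryPhase

theorem nonstationary_case_exists_continuous_decay (α : ℝ) (hα : 0 < α) :
    ∃ h : ℝ → ℂ,
      (∀ l : ℝ, -1 ≤ l →
        Tendsto
          (fun R : ℝ => ∫ ξ in (1 : ℝ)..R,
            ((ξ ^ (-(2⁻¹) : ℝ) : ℝ) : ℂ) *
              Complex.exp (Complex.I * ((l * ξ + ξ ^ (α + 1) : ℝ) : ℂ)))
          atTop (nhds (h l))) ∧
      ContinuousOn h (Set.Ici (-1 : ℝ)) ∧
      Tendsto h atTop (nhds 0) :=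
  ⟨NonstationaryPhase.kernel α,
    fun _ hl => NonstationaryPhase.tendsto_intervalIntegral_kernel hα hl,
    NonstationaryPhase.continuousOn_kernel hα, NonstationaryPhase.tendsto_kernel_atTop hα⟩
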